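/- Let V be a finite-dimensional real inner product space with inner product h, and R : V × V → End(V) a curvature-like tensor (with the standard symmetries). Fix y ∈ V nonzero and let A_y(v) = R(v,y)y. If the 'flag curvature with respect to g', K(y,v) = g(v, A_y(v)) / (g(y,y)g(v,v) − g(v,y)²), is negative for all v linearly independent from y (where g is some positive definite symmetric bilinear form), then the 'sectional curvature with respect to h', h(v, A_y(v)) / (h(y,y)h(v,v) − h(v,y)²), is negative for all v linearly independent from y. -/

import Mathlib

/-!
Since `A` is `h`-self-adjoint and kills `y`, it preserves the `h`-orthogonal complement `y^⊥`, and
`h(v, A v)` only depends on the `y^⊥`-component of `v`. An eigenvector of `A` in `y^⊥` is linearly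
independent from `y`, so negativity of the `g`-flag curvature forces every eigenvalue of `A` on `y^⊥`
to be negative; by the spectral theorem `A` is then negative definite on `y^⊥`.
-/

open scoped RealInnerProductSpace
open Module End

namespace LinearMap.IsSymmetric

variable {V : Type*} [NormedAddCommGroup V] [InnerProductSpace ℝ V] {A : V →ₗ[ℝ] V}

theorem inner_apply_self_eq_sum_eigenvalues [FiniteDimensional ℝ V] (hA : A.IsSymmetric)
    (x : V) :
    ⟪A x, x⟫ = ∑ i, hA.eigenvalues rfl i * (hA.eigenvectorBasis rfl).repr x i ^ 2 := by
  rw [← (hA.eigenvectorBasis rfl).repr.inner_map_map, PiLp.inner_apply]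
  simp only [eigenvectorBasis_apply_self_apply, RCLike.inner_apply, conj_trivial]
  congr 1 with i
  simp only [RCLike.ofReal_real_eq_id, id_eq]
  ring

theorem inner_apply_self_neg_of_forall_hasEigenvalue_neg [FiniteDimensional ℝ V]
    (hA : A.IsSymmetric) (hneg : ∀ μ, HasEigenvalue A μ → μ < 0) {x : V} (hx : x ≠ 0) :
    ⟪A x, x⟫ < 0 := by
  set b := hA.eigenvectorBasis rfl
  obtain ⟨i, hi⟩ : ∃ i, b.repr x i ≠ 0 := by
    by_contra! h
    exact hx (b.repr.map_eq_zero_iff.mp (PiLp.ext h))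
  rw [hA.inner_apply_self_eq_sum_eigenvalues]
  refine Finset.sum_neg' (fun j _ => ?_) ⟨i, Finset.mem_univ _, ?_⟩
  · exact mul_nonpos_of_nonpos_of_nonneg (hneg _ (hA.hasEigenvalue_eigenvalues rfl j)).le
      (sq_nonneg _)
  · exact mul_neg_of_neg_of_pos (hneg _ (hA.hasEigenvalue_eigenvalues rfl i)) (by positivity)

theorem inner_self_apply_add_smul_of_apply_eq_zero {y : V} (hA : A.IsSymmetric) (hAy : A y = 0)
    (v : V) (c : ℝ) :
    ⟪v + c • y, A (v + c • y)⟫ = ⟪v, A v⟫ := by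
  rw [map_add, map_smul, hAy, smul_zero, add_zero, inner_add_left, real_inner_smul_left, ← hA y,
    hAy, inner_zero_left, mul_zero, add_zero]

theorem mapsTo_orthogonal_span_singleton {y : V} (hA : A.IsSymmetric) (hAy : A y = 0) :
    ∀ w ∈ (ℝ ∙ y)ᗮ, A w ∈ (ℝ ∙ y)ᗮ := by
  intro w hw
  rw [Submodule.mem_orthogonal_singleton_iff_inner_right, ← hA, hAy, inner_zero_left]

theorem inner_self_apply_neg_of_linearIndependent [FiniteDimensional ℝ V] {y : V}
    (hA : A.IsSymmetric) (hAy : A y = 0)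
    (heig : ∀ w ∈ (ℝ ∙ y)ᗮ, w ≠ 0 → ∀ μ : ℝ, A w = μ • w → μ < 0)
    {v : V} (hv : LinearIndependent ℝ ![v, y]) : ⟪v, A v⟫ < 0 := by
  have hAK := hA.mapsTo_orthogonal_span_singleton hAy
  have hnegK : ∀ μ, HasEigenvalue (A.restrict hAK) μ → μ < 0 := by
    intro μ hμ
    obtain ⟨w, hw⟩ := hμ.exists_hasEigenvector
    refine heig w w.2 (by simpa using hw.2) μ ?_
    simpa using congr_arg Subtype.val (mem_eigenspace_iff.mp hw.1)
  obtain ⟨_, hu, w, hwK, rfl⟩ := (ℝ ∙ y).exists_add_mem_mem_orthogonal v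
  obtain ⟨c, rfl⟩ := Submodule.mem_span_singleton.mp hu
  have hw : w ≠ 0 := by
    rintro rfl
    simpa using LinearIndependent.pair_iff.mp hv 1 (-c)
  rw [add_comm, hA.inner_self_apply_add_smul_of_apply_eq_zero hAy, real_inner_comm]
  exact (hA.restrict_invariant hAK).inner_apply_self_neg_of_forall_hasEigenvalue_neg hnegK
    (x := ⟨w, hwK⟩) (by simpa using hw)

end LinearMap.IsSymmetric

theorem LinearMap.BilinForm.sub_sq_pos_of_linearIndependent {V : Type*} [AddCommGroup V]
    [Module ℝ V] {B : LinearMap.BilinForm ℝ V} (hB : LinearMap.IsSymm B)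
    (hpos : ∀ v, v ≠ 0 → 0 < B v v) {v y : V} (h : LinearIndependent ℝ ![v, y]) :
    0 < B y y * B v v - B v y ^ 2 := by
  have := (B.apply_sq_lt_iff_linearIndependent_of_symm hpos hB v y).mpr h
  linarith [mul_comm (B v v) (B y y)]

theorem linearIndependent_pair_iff_real_inner_sq_lt {V : Type*} [NormedAddCommGroup V]
    [InnerProductSpace ℝ V] {v y : V} :
    LinearIndependent ℝ ![v, y] ↔ ⟪v, y⟫ ^ 2 < ⟪v, v⟫ * ⟪y, y⟫ :=
  (LinearMap.BilinForm.apply_sq_lt_iff_linearIndependent_of_symm (innerₗ V)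
    (fun _ => real_inner_self_pos.mpr) (LinearMap.isSymm_def.mpr fun u w => real_inner_comm w u)
    v y).symm

/-- negative flag curvature with respect to `g` implies negative sectional
curvature with respect to `h`, for `A = A_y` h-self-adjoint with `A y = 0`. -/
theorem stmt6 (V : Type*) [NormedAddCommGroup V] [InnerProductSpace ℝ V]
    [FiniteDimensional ℝ V]
    (g : LinearMap.BilinForm ℝ V) (hgsymm : ∀ u v, g u v = g v u)
    (hgpos : ∀ v : V, v ≠ 0 → 0 < g v v)
    (A : V →ₗ[ℝ] V) (hA : ∀ u w : V, ⟪A u, w⟫ = ⟪u, A w⟫)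
    (y : V) (hy : y ≠ 0) (hAy : A y = 0)
    (hneg : ∀ v : V, LinearIndependent ℝ ![v, y] →
      g v (A v) / (g y y * g v v - g v y ^ 2) < 0) :
    ∀ v : V, LinearIndependent ℝ ![v, y] →
      ⟪v, A v⟫ / (⟪y, y⟫ * ⟪v, v⟫ - ⟪v, y⟫ ^ 2) < 0 := by
  have hg : LinearMap.IsSymm g := LinearMap.isSymm_def.mpr hgsymm
  have heig : ∀ w ∈ (ℝ ∙ y)ᗮ, w ≠ 0 → ∀ μ : ℝ, A w = μ • w → μ < 0 := by
    intro w hwy hw μ hAw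
    have hindep : LinearIndependent ℝ ![w, y] := by
      rw [linearIndependent_pair_iff_real_inner_sq_lt,
        Submodule.mem_orthogonal_singleton_iff_inner_left.mp hwy]
      simpa using mul_pos (real_inner_self_pos.mpr hw) (real_inner_self_pos.mpr hy)
    have hden := LinearMap.BilinForm.sub_sq_pos_of_linearIndependent hg hgpos hindep
    have := neg_of_div_neg_left (hneg w hindep) hden.le
    rw [hAw, map_smul, smul_eq_mul] at this
    exact neg_of_mul_neg_left this (hgpos w hw).le
  intro v hv
  have hden : 0 < ⟪y, y⟫ * ⟪v, v⟫ - ⟪v, y⟫ ^ 2 := by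
    linarith [linearIndependent_pair_iff_real_inner_sq_lt.mp hv, mul_comm ⟪v, v⟫ ⟪y, y⟫]
  exact div_neg_of_neg_of_pos
    (LinearMap.IsSymmetric.inner_self_apply_neg_of_linearIndependent hA hAy heig hv) hden
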